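/- Every fixed point of the Minkowski question mark function lying in the open interval (0, 1/2) in fact lies in the open interval (2/5, 3/7). -/

import Mathlib

/-!
Peeling off the first partial quotient `n = ⌊1/x⌋` of the Denjoy–Salem series gives
`?(x) = (2 - ?(1/x - n)) / 2^n`, and the alternating series satisfies `0 ≤ ? ≤ 1`. Hence `?` is
at most `2^(1-n)` on the cylinder `(1/(n+1), 1/n]`, which lies below the diagonal as soon as
`n ≥ 3`. On `(1/3, 1/2)` one has `?(x) = (2 - ?(y)) / 4` with `y = 1/x - 2`, and descending one or
two more levels in `y` shows `?(x) < x` on `(1/3, 2/5]` and `?(x) > x` on `[3/7, 1/2)`.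
-/

open scoped Classical

/-- The Gauss map `x ↦ {1/x}`. -/
noncomputable def gaussMap (x : ℝ) : ℝ := Int.fract x⁻¹

/-- `cfDigit x n` is the `(n+1)`-st partial quotient `a_{n+1}` of the continued
fraction expansion `x = [a_1, a_2, …]` of `x ∈ (0,1)`. -/
noncomputable def cfDigit (x : ℝ) (n : ℕ) : ℤ := ⌊(gaussMap^[n] x)⁻¹⌋

/-- The Minkowski question mark function, via the Denjoy–Salem series
`?(x) = ∑_{k≥1} (-1)^{k+1} / 2^{a_1+⋯+a_k-1}` (a finite sum for rational `x`). -/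
noncomputable def minkowskiQ (x : ℝ) : ℝ :=
  ∑' k : ℕ, if ∀ i ≤ k, 0 < cfDigit x i then
      (-1 : ℝ) ^ k / (2 : ℝ) ^ ((∑ i ∈ Finset.range (k + 1), cfDigit x i) - 1)
    else 0

noncomputable def minkowskiQTerm (x : ℝ) (k : ℕ) : ℝ :=
  if ∀ i ≤ k, 0 < cfDigit x i then
    (-1 : ℝ) ^ k / (2 : ℝ) ^ ((∑ i ∈ Finset.range (k + 1), cfDigit x i) - 1)
  else 0

lemma minkowskiQ_eq_tsum (x : ℝ) : minkowskiQ x = ∑' k, minkowskiQTerm x k := rfl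

lemma cfDigit_zero (x : ℝ) : cfDigit x 0 = ⌊x⁻¹⌋ := rfl

lemma cfDigit_succ (x : ℝ) (n : ℕ) : cfDigit x (n + 1) = cfDigit (gaussMap x) n := rfl

lemma gaussMap_eq (x : ℝ) : gaussMap x = x⁻¹ - ⌊x⁻¹⌋ := (Int.self_sub_floor _).symm

lemma abs_minkowskiQTerm_le (x : ℝ) (k : ℕ) : |minkowskiQTerm x k| ≤ (1 / 2) ^ k := by
  unfold minkowskiQTerm
  split_ifs with h
  · have hsum : (k : ℤ) + 1 ≤ ∑ i ∈ Finset.range (k + 1), cfDigit x i := by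
      simpa using Finset.card_nsmul_le_sum (Finset.range (k + 1)) (cfDigit x) 1
        fun i hi => h i (Nat.lt_succ_iff.1 (Finset.mem_range.1 hi))
    rw [abs_div, abs_pow, abs_neg, abs_one, one_pow, abs_of_pos (zpow_pos two_pos _),
      one_div_pow, one_div_le_one_div (zpow_pos two_pos _) (pow_pos two_pos _),
      ← zpow_natCast]
    exact zpow_le_zpow_right₀ one_le_two (by omega)
  · simp

lemma summable_minkowskiQTerm (x : ℝ) : Summable (minkowskiQTerm x) :=
  .of_norm_bounded (summable_geometric_of_lt_one (by norm_num) (by norm_num))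
    (abs_minkowskiQTerm_le x)

lemma minkowskiQTerm_zero {x : ℝ} (h : 0 < cfDigit x 0) :
    minkowskiQTerm x 0 = 2 ^ (1 - cfDigit x 0) := by
  rw [minkowskiQTerm, if_pos fun i hi => by rwa [Nat.le_zero.1 hi]]
  simp [← zpow_neg]

lemma minkowskiQTerm_succ {x : ℝ} (h : 0 < cfDigit x 0) (k : ℕ) :
    minkowskiQTerm x (k + 1) = -2 ^ (-cfDigit x 0) * minkowskiQTerm (gaussMap x) k := by
  have hcond : (∀ i ≤ k + 1, 0 < cfDigit x i) ↔ ∀ i ≤ k, 0 < cfDigit (gaussMap x) i :=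
    ⟨fun hx i hi => hx (i + 1) (by omega), fun hx i hi => by
      cases i with
      | zero => exact h
      | succ i => exact hx i (by omega)⟩
  have hsum : ∑ i ∈ Finset.range (k + 1 + 1), cfDigit x i
      = cfDigit x 0 + ∑ i ∈ Finset.range (k + 1), cfDigit (gaussMap x) i := by
    rw [Finset.sum_range_succ', add_comm]
    simp only [cfDigit_succ]
  unfold minkowskiQTerm
  by_cases hk : ∀ i ≤ k, 0 < cfDigit (gaussMap x) i
  · rw [if_pos (hcond.2 hk), if_pos hk, hsum, add_sub_assoc, zpow_add₀ two_ne_zero, zpow_neg]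
    field_simp
    ring
  · rw [if_neg (mt hcond.1 hk), if_neg hk, mul_zero]

lemma minkowskiQTerm_eq_zero {x : ℝ} (h : cfDigit x 0 ≤ 0) (k : ℕ) : minkowskiQTerm x k = 0 :=
  if_neg fun hk => (hk 0 k.zero_le).not_ge h

lemma minkowskiQTerm_two_mul_add_nonneg (x : ℝ) (k : ℕ) :
    0 ≤ minkowskiQTerm x (2 * k) + minkowskiQTerm x (2 * k + 1) := by
  have heven : 0 ≤ minkowskiQTerm x (2 * k) := by
    unfold minkowskiQTerm
    split_ifs
    · rw [(even_two_mul k).neg_one_pow]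
      positivity
    · rfl
  by_cases h : ∀ i ≤ 2 * k + 1, 0 < cfDigit x i
  · unfold minkowskiQTerm
    rw [if_pos h, if_pos fun i hi => h i (by omega), (even_two_mul k).neg_one_pow,
      (odd_two_mul_add_one k).neg_one_pow, Finset.sum_range_succ _ (2 * k + 1), neg_div,
      ← sub_eq_add_neg, sub_nonneg]
    exact one_div_le_one_div_of_le (zpow_pos two_pos _)
      (zpow_le_zpow_right₀ one_le_two (by linarith [h (2 * k + 1) le_rfl]))
  · rwa [show minkowskiQTerm x (2 * k + 1) = 0 from if_neg h, add_zero]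

theorem minkowskiQ_eq_sub {x : ℝ} (h : 0 < cfDigit x 0) :
    minkowskiQ x = 2 ^ (1 - cfDigit x 0) - 2 ^ (-cfDigit x 0) * minkowskiQ (gaussMap x) := by
  rw [minkowskiQ_eq_tsum, (summable_minkowskiQTerm x).tsum_eq_zero_add, minkowskiQTerm_zero h]
  simp_rw [minkowskiQTerm_succ h, tsum_mul_left, minkowskiQ_eq_tsum]
  ring

theorem minkowskiQ_eq_zero_of_cfDigit_nonpos {x : ℝ} (h : cfDigit x 0 ≤ 0) :
    minkowskiQ x = 0 := by
  simp [minkowskiQ_eq_tsum, minkowskiQTerm_eq_zero h]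

theorem minkowskiQ_nonneg (x : ℝ) : 0 ≤ minkowskiQ x := by
  have hs := summable_minkowskiQTerm x
  have heven : Summable fun k => minkowskiQTerm x (2 * k) :=
    hs.comp_injective fun a b hab => by omega
  have hodd : Summable fun k => minkowskiQTerm x (2 * k + 1) :=
    hs.comp_injective fun a b hab => by omega
  rw [minkowskiQ_eq_tsum, ← tsum_even_add_odd heven hodd, ← heven.tsum_add hodd]
  exact tsum_nonneg (minkowskiQTerm_two_mul_add_nonneg x)

theorem minkowskiQ_le_one (x : ℝ) : minkowskiQ x ≤ 1 := by
  by_cases h : 0 < cfDigit x 0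
  · rw [minkowskiQ_eq_sub h]
    have := zpow_le_one_of_nonpos₀ (one_le_two : (1 : ℝ) ≤ 2) (by omega : 1 - cfDigit x 0 ≤ 0)
    nlinarith [minkowskiQ_nonneg (gaussMap x), zpow_pos (two_pos : (0 : ℝ) < 2) (-cfDigit x 0)]
  · rw [minkowskiQ_eq_zero_of_cfDigit_nonpos (not_lt.1 h)]
    exact zero_le_one

lemma floor_inv_eq_iff {x : ℝ} (hx : 0 < x) (n : ℕ) :
    ⌊x⁻¹⌋ = n ↔ n * x ≤ 1 ∧ 1 < (n + 1) * x := by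
  rw [Int.floor_eq_iff, ← one_div, le_div_iff₀ hx, div_lt_iff₀ hx]
  push_cast
  rfl

lemma exists_floor_inv_eq {x : ℝ} (hx : 0 < x) :
    ∃ n : ℕ, ⌊x⁻¹⌋ = n ∧ n * x ≤ 1 ∧ 1 < (n + 1) * x :=
  have h := (Int.natCast_floor_eq_floor (inv_nonneg.2 hx.le)).symm
  ⟨_, h, (floor_inv_eq_iff hx _).1 h⟩

theorem minkowskiQ_eq_of_floor_inv_eq {x : ℝ} {n : ℕ} (hn : 0 < n) (h : ⌊x⁻¹⌋ = n) :
    minkowskiQ x = (2 - minkowskiQ (x⁻¹ - n)) / 2 ^ n := by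
  have ha : cfDigit x 0 = n := h
  rw [minkowskiQ_eq_sub (by omega), gaussMap_eq, ← cfDigit_zero, ha, zpow_sub₀ two_ne_zero,
    zpow_neg, zpow_natCast]
  push_cast
  ring

lemma minkowskiQ_le_two_div_pow {x : ℝ} {n : ℕ} (hn : 0 < n) (h : ⌊x⁻¹⌋ = n) :
    minkowskiQ x ≤ 2 / 2 ^ n := by
  rw [minkowskiQ_eq_of_floor_inv_eq hn h]
  gcongr
  linarith [minkowskiQ_nonneg (x⁻¹ - n)]

lemma minkowskiQ_zero : minkowskiQ 0 = 0 :=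
  minkowskiQ_eq_zero_of_cfDigit_nonpos (by simp [cfDigit_zero])

lemma minkowskiQ_le_half {x : ℝ} (hx : x ≤ 1 / 2) : minkowskiQ x ≤ 1 / 2 := by
  rcases le_or_gt x 0 with h0 | h0
  · rw [minkowskiQ_eq_zero_of_cfDigit_nonpos]
    · norm_num
    · exact Int.floor_nonpos (inv_nonpos.2 h0)
  obtain ⟨n, hn, -, h₂⟩ := exists_floor_inv_eq h0
  have hn2 : 2 ≤ n := by
    have : (1 : ℝ) < n := by nlinarith
    exact_mod_cast this
  calc minkowskiQ x ≤ 2 / 2 ^ n := minkowskiQ_le_two_div_pow (by omega) hn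
    _ ≤ 2 / 2 ^ 2 := by gcongr; norm_num
    _ = 1 / 2 := by norm_num

lemma half_le_minkowskiQ {x : ℝ} (h₁ : 1 / 2 ≤ x) (h₂ : x ≤ 1) : 1 / 2 ≤ minkowskiQ x := by
  rcases h₁.eq_or_lt with rfl | h₁
  · rw [minkowskiQ_eq_of_floor_inv_eq (n := 2) (by norm_num) (by norm_num)]
    norm_num [minkowskiQ_zero]
  · rw [minkowskiQ_eq_of_floor_inv_eq (n := 1) one_pos
      ((floor_inv_eq_iff (by linarith) 1).2 (by constructor <;> push_cast <;> linarith))]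
    linarith [minkowskiQ_le_one (x⁻¹ - (1 : ℕ))]

lemma three_quarters_le_minkowskiQ {x : ℝ} (h₁ : 2 / 3 ≤ x) (h₂ : x ≤ 1) :
    3 / 4 ≤ minkowskiQ x := by
  rw [minkowskiQ_eq_of_floor_inv_eq (n := 1) one_pos
    ((floor_inv_eq_iff (by linarith) 1).2 (by constructor <;> push_cast <;> linarith))]
  have : x⁻¹ - (1 : ℕ) ≤ 1 / 2 := by
    have := inv_anti₀ (by norm_num) h₁
    norm_num at this ⊢
    linarith
  linarith [minkowskiQ_le_half this]

lemma add_div_two_pow_le {s : ℝ} {m n : ℕ} (hs : 1 ≤ m + s) (hmn : m ≤ n) :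
    (n + s) / 2 ^ n ≤ (m + s) / 2 ^ m := by
  induction n, hmn using Nat.le_induction with
  | base => rfl
  | succ n hmn ih =>
    refine le_trans ?_ ih
    have : (m : ℝ) ≤ n := by exact_mod_cast hmn
    rw [pow_succ', ← div_div, div_le_div_iff_of_pos_right (by positivity),
      div_le_iff₀ (two_pos : (0 : ℝ) < 2)]
    push_cast
    linarith

theorem minkowskiQ_lt_self_of_le_third {x : ℝ} (h₀ : 0 < x) (h : x ≤ 1 / 3) :
    minkowskiQ x < x := by
  obtain ⟨n, hn, -, h₂⟩ := exists_floor_inv_eq h₀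
  have hn3 : 3 ≤ n := by
    have : (2 : ℝ) < n := by nlinarith
    exact_mod_cast this
  have hQ := minkowskiQ_le_two_div_pow (by omega) hn
  have hdecay := add_div_two_pow_le (s := 1) (by norm_num) hn3
  have key : ((n : ℝ) + 1) * (2 / 2 ^ n) ≤ 1 := by
    rw [show ((n : ℝ) + 1) * (2 / 2 ^ n) = 2 * ((n + 1) / 2 ^ n) by ring]
    norm_num at hdecay
    linarith
  have : 2 / 2 ^ n < x := lt_of_mul_lt_mul_left (key.trans_lt h₂) (by positivity)
  linarith

lemma minkowskiQ_mul_two_add_lt {y : ℝ} (h₀ : 0 < y) (h : y ≤ 1 / 4) :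
    minkowskiQ y * (2 + y) < 2 * y := by
  obtain ⟨n, hn, -, h₂⟩ := exists_floor_inv_eq h₀
  have hn4 : 4 ≤ n := by
    have : (3 : ℝ) < n := by nlinarith
    exact_mod_cast this
  have hQ := minkowskiQ_le_two_div_pow (by omega) hn
  have hdecay := add_div_two_pow_le (s := 3 / 2) (by norm_num) hn4
  have key : (2 * (n : ℝ) + 3) * (2 / 2 ^ n) ≤ 11 / 8 := by
    rw [show (2 * (n : ℝ) + 3) * (2 / 2 ^ n) = 4 * ((n + 3 / 2) / 2 ^ n) by ring]
    norm_num at hdecay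
    linarith
  have hp : 0 < 2 / (2 : ℝ) ^ n := by positivity
  nlinarith [minkowskiQ_nonneg y]

theorem minkowskiQ_eq_of_third_lt {x : ℝ} (h₁ : 1 / 3 < x) (h₂ : x ≤ 1 / 2) :
    minkowskiQ x = (2 - minkowskiQ (x⁻¹ - 2)) / 4 := by
  rw [minkowskiQ_eq_of_floor_inv_eq (n := 2) two_pos
    ((floor_inv_eq_iff (by linarith) 2).2 (by constructor <;> push_cast <;> linarith))]
  norm_num

theorem minkowskiQ_lt_self_of_le_two_fifths {x : ℝ} (h₀ : 0 < x) (h : x ≤ 2 / 5) :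
    minkowskiQ x < x := by
  rcases le_or_gt x (1 / 3) with h₃ | h₃
  · exact minkowskiQ_lt_self_of_le_third h₀ h₃
  rw [minkowskiQ_eq_of_third_lt h₃ (by linarith)]
  set y := x⁻¹ - 2 with hy
  have hxy : x * (2 + y) = 1 := by rw [hy]; field_simp; ring
  have hy₁ : 1 / 2 ≤ y := by nlinarith
  have hy₂ : y ≤ 1 := by nlinarith
  have hhalf := half_le_minkowskiQ hy₁ hy₂
  -- so `?(x) ≤ 3/8`; below `3/8` one has `y ≥ 2/3`, whence `?(x) ≤ 5/16 < 1/3`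
  rcases le_or_gt x (3 / 8) with h₄ | h₄
  · linarith [three_quarters_le_minkowskiQ (by nlinarith) hy₂]
  · linarith

theorem self_lt_minkowskiQ_of_three_sevenths_le {x : ℝ} (h : 3 / 7 ≤ x) (h₁ : x < 1 / 2) :
    x < minkowskiQ x := by
  rw [minkowskiQ_eq_of_third_lt (by linarith) h₁.le]
  set y := x⁻¹ - 2 with hy
  have hxy : x * (2 + y) = 1 := by rw [hy]; field_simp; ring
  have hy₀ : 0 < y := by nlinarith
  have hy₁ : y ≤ 1 / 3 := by nlinarith
  rcases le_or_gt y (1 / 4) with h₄ | h₄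
  · nlinarith [minkowskiQ_mul_two_add_lt hy₀ h₄]
  rw [minkowskiQ_eq_of_floor_inv_eq (n := 3) (by norm_num)
    ((floor_inv_eq_iff hy₀ 3).2 (by constructor <;> push_cast <;> linarith))]
  set w := y⁻¹ - (3 : ℕ) with hw
  rcases lt_or_ge x (7 / 16) with h₅ | h₅
  · nlinarith [minkowskiQ_nonneg w]
  -- now `w ≥ 1/2`, so `?(y) ≤ 3/16 < 2 - 4x`, as `x < 4/9 < 29/64`
  have hyw : y * (3 + w) = 1 := by rw [hw]; field_simp; push_cast; ring
  have hw₁ : 1 / 2 ≤ w := by nlinarith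
  have hw₂ : w ≤ 1 := by nlinarith
  nlinarith [half_le_minkowskiQ hw₁ hw₂]

theorem fixed_points_localization :
    ∀ x ∈ Set.Ioo (0 : ℝ) (1 / 2), minkowskiQ x = x → x ∈ Set.Ioo (2 / 5 : ℝ) (3 / 7) := by
  rintro x ⟨h₀, h₁⟩ hfix
  exact ⟨lt_of_not_ge fun h => (minkowskiQ_lt_self_of_le_two_fifths h₀ h).ne hfix,
    lt_of_not_ge fun h => (self_lt_minkowskiQ_of_three_sevenths_le h h₁).ne' hfix⟩
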